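/- Let P = [a]×[b]. The order ideal cardinality statistic I ↦ #I can be written as ab/2 plus an ℝ-linear combination of the signed toggleability statistics T_p; hence the average of #I along any rowmotion orbit is ab/2. -/

import Mathlib

open scoped Classical
open Finset

variable {P : Type*} [Fintype P] [PartialOrder P]

/-- `I` is an order ideal (downward-closed subset) of the finite poset `P`. -/
def IsIdeal (I : Finset P) : Prop := ∀ ⦃x y : P⦄, x ≤ y → y ∈ I → x ∈ I

/-- `p` is a minimal element of the complement `P \ I`. -/
def CanTogIn (I : Finset P) (p : P) : Prop := p ∉ I ∧ ∀ q, q < p → q ∈ I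

/-- `p` is a maximal element of `I`. -/
def CanTogOut (I : Finset P) (p : P) : Prop := p ∈ I ∧ ∀ q, p < q → q ∉ I

/-- Rowmotion: the order ideal generated by the minimal elements of `P \ I`. -/
noncomputable def rowmotion (I : Finset P) : Finset P :=
  univ.filter fun x => ∃ y, CanTogIn I y ∧ x ≤ y

/-- Toggleability statistic `T⁺_p`. -/
noncomputable def Tin (p : P) (I : Finset P) : ℝ := if CanTogIn I p then 1 else 0

/-- Toggleability statistic `T⁻_p`. -/
noncomputable def Tout (p : P) (I : Finset P) : ℝ := if CanTogOut I p then 1 else 0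

/-- Signed toggleability statistic `T_p = T⁺_p - T⁻_p`. -/
noncomputable def Tsgn (p : P) (I : Finset P) : ℝ := Tin p I - Tout p I

/- ### Auxiliary general-poset lemmas -/

theorem rowmotion_isIdeal (I : Finset P) : IsIdeal (rowmotion I) := by
  intro x y hxy hy
  simp only [rowmotion, mem_filter, mem_univ, true_and] at *
  obtain ⟨z, hz, hyz⟩ := hy
  exact ⟨z, hz, hxy.trans hyz⟩

theorem canTogOut_rowmotion (I : Finset P) (p : P) :
    CanTogOut (rowmotion I) p ↔ CanTogIn I p := by
  constructor
  · rintro ⟨hp, hmax⟩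
    simp only [rowmotion, mem_filter, mem_univ, true_and] at hp
    obtain ⟨y, hy, hpy⟩ := hp
    rcases eq_or_lt_of_le hpy with rfl | hlt
    · exact hy
    · exact absurd (by
        simp only [rowmotion, mem_filter, mem_univ, true_and]
        exact ⟨y, hy, le_refl y⟩) (hmax y hlt)
  · rintro ⟨hpI, hbelow⟩
    refine ⟨by
      simp only [rowmotion, mem_filter, mem_univ, true_and]
      exact ⟨p, ⟨hpI, hbelow⟩, le_refl p⟩, ?_⟩
    intro q hq hqR
    simp only [rowmotion, mem_filter, mem_univ, true_and] at hqR
    obtain ⟨y, hy, hqy⟩ := hqR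
    exact hpI (hy.2 p (lt_of_lt_of_le hq hqy))

theorem tsgn_orbit (I : Finset P) (N : ℕ) (hN : rowmotion^[N] I = I) (p : P) :
    ∑ k ∈ Finset.range N, Tsgn p (rowmotion^[k] I) = 0 := by
  have key : ∀ k, Tin p (rowmotion^[k] I) = Tout p (rowmotion^[k+1] I) := by
    intro k
    rw [Function.iterate_succ_apply']
    unfold Tin Tout
    simp [canTogOut_rowmotion]
  have h2 : ∑ k ∈ range N, Tin p (rowmotion^[k] I)
      = ∑ k ∈ range N, Tout p (rowmotion^[k] I) := by
    calc ∑ k ∈ range N, Tin p (rowmotion^[k] I)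
        = ∑ k ∈ range N, Tout p (rowmotion^[k+1] I) := by simp [key]
      _ = ∑ k ∈ range (N+1), Tout p (rowmotion^[k] I) - Tout p (rowmotion^[0] I) := by
          rw [Finset.sum_range_succ']; ring
      _ = ∑ k ∈ range N, Tout p (rowmotion^[k] I) := by
          rw [Finset.sum_range_succ, hN]; simp
  simp only [Tsgn, Finset.sum_sub_distrib, h2, sub_self]

/- ### The coefficient function -/

noncomputable def gamR (a b : ℕ) (x : ℝ) : ℝ := (x + b) * (x - a) / 2

/- ### The main identity on the rectangle -/

theorem key_identity {a b : ℕ} (ha : 0 < a) (hb : 0 < b)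
    (I : Finset (Fin a × Fin b)) (hI : IsIdeal I) :
    (I.card : ℝ) = (a : ℝ) * b / 2 +
      ∑ p : Fin a × Fin b, gamR a b ((p.1.val : ℝ) - (p.2.val : ℝ)) * Tsgn p I := by
  classical
  set g : ℕ → ℕ := fun n =>
    if h : n < a then (univ.filter fun j : Fin b => ((⟨n, h⟩ : Fin a), j) ∈ I).card else 0
    with hgdef
  have hg0 : ∀ n, a ≤ n → g n = 0 := fun n hn => dif_neg (by omega)
  have hgb : ∀ n, g n ≤ b := by
    intro n
    simp only [hgdef]
    split
    · exact (card_filter_le _ _).trans (by simp)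
    · exact Nat.zero_le b
  have hgval : ∀ i : Fin a, g i.val = (univ.filter fun j : Fin b => (i, j) ∈ I).card := by
    intro i
    simp only [hgdef, i.isLt, dif_pos, Fin.eta]
  have hmemg : ∀ (i : Fin a) (j : Fin b), ((i, j) ∈ I) ↔ (j : ℕ) < g i.val := by
    intro i j
    rw [hgval i]
    set S := univ.filter fun j : Fin b => (i, j) ∈ I with hS
    constructor
    · intro hmem
      have hsub : Iic j ⊆ S := by
        intro j' hj'
        simp only [hS, mem_filter, mem_univ, true_and]
        exact hI (show (i, j') ≤ (i, j) from ⟨le_refl _, mem_Iic.mp hj'⟩) hmem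
      have := card_le_card hsub
      rw [Fin.card_Iic] at this
      omega
    · intro hlt
      by_contra hmem
      have hsub : S ⊆ Iio j := by
        intro j' hj'
        simp only [hS, mem_filter, mem_univ, true_and] at hj'
        rw [mem_Iio]
        by_contra hle
        exact hmem (hI (show (i, j) ≤ (i, j') from ⟨le_refl _, not_lt.mp hle⟩) hj')
      have := card_le_card hsub
      rw [Fin.card_Iio] at this
      omega
  have hmono : ∀ n, g (n + 1) ≤ g n := by
    intro n
    by_cases h1 : n + 1 < a
    · have hn : n < a := by omega
      simp only [hgdef]
      rw [dif_pos h1, dif_pos hn]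
      apply card_le_card
      intro j hj
      simp only [mem_filter, mem_univ, true_and] at hj ⊢
      exact hI (show ((⟨n, hn⟩ : Fin a), j) ≤ ((⟨n+1, h1⟩ : Fin a), j) from
        ⟨by simp [Fin.le_def], le_refl _⟩) hj
    · rw [hg0 _ (by omega)]
      exact Nat.zero_le _
  have hanti : Antitone g := antitone_nat_of_succ_le hmono
  set u : ℕ → ℕ := fun n => if n = 0 then b else g (n - 1) with hudefs
  have hudef : ∀ n, u n = if n = 0 then b else g (n - 1) := fun n => rfl
  have hub : ∀ n, u n ≤ b := by
    intro n; rw [hudef]; split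
    · exact le_rfl
    · exact hgb _
  have hgu : ∀ n, g n ≤ u n := by
    intro n
    cases n with
    | zero => rw [hudef, if_pos rfl]; exact hgb 0
    | succ m => rw [hudef, if_neg (Nat.succ_ne_zero m), Nat.add_sub_cancel]; exact hmono m
  have hctin : ∀ (i : Fin a) (j : Fin b),
      CanTogIn I (i, j) ↔ ((j : ℕ) = g i.val ∧ g i.val < u i.val) := by
    intro i j
    constructor
    · rintro ⟨hnot, hbel⟩
      have h1 : ¬ ((j : ℕ) < g i.val) := fun h => hnot ((hmemg i j).mpr h)
      have h2 : (j : ℕ) ≤ g i.val := by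
        rcases Nat.eq_zero_or_pos j.val with h0 | hpos
        · omega
        · have hq : (i, (⟨j.val - 1, by omega⟩ : Fin b)) ∈ I := by
            apply hbel
            rw [Prod.mk_lt_mk]
            right
            exact ⟨le_refl _, by rw [Fin.lt_def]; simp; omega⟩
          have := (hmemg _ _).mp hq
          simp only [] at this
          omega
      have hj : (j : ℕ) = g i.val := by omega
      refine ⟨hj, ?_⟩
      rcases Nat.eq_zero_or_pos i.val with hi0 | hipos
      · rw [hudef, if_pos hi0]
        have := j.isLt
        omega
      · have hq : ((⟨i.val - 1, by omega⟩ : Fin a), j) ∈ I := by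
          apply hbel
          rw [Prod.mk_lt_mk]
          left
          exact ⟨by rw [Fin.lt_def]; simp; omega, le_refl _⟩
        have := (hmemg _ _).mp hq
        rw [hudef, if_neg (by omega)]
        simp only [] at this
        omega
    · rintro ⟨hj, hu⟩
      constructor
      · intro hmem
        have := (hmemg i j).mp hmem
        omega
      · rintro ⟨x, y⟩ hq
        rw [Prod.mk_lt_mk] at hq
        apply (hmemg x y).mpr
        rcases hq with ⟨hx, hy⟩ | ⟨hx, hy⟩
        · have hi0 : i.val ≠ 0 := by
            have := (Fin.lt_def).mp hx
            omega
          have hxle : x.val ≤ i.val - 1 := by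
            have := (Fin.lt_def).mp hx
            omega
          have hge : u i.val ≤ g x.val := by
            rw [hudef, if_neg hi0]
            exact hanti hxle
          have hyle : (y : ℕ) ≤ (j : ℕ) := (Fin.le_def).mp hy
          omega
        · have hge : g i.val ≤ g x.val := hanti ((Fin.le_def).mp hx)
          have hylt : (y : ℕ) < (j : ℕ) := (Fin.lt_def).mp hy
          omega
  have hctout : ∀ (i : Fin a) (j : Fin b),
      CanTogOut I (i, j) ↔ ((j : ℕ) + 1 = g i.val ∧ g (i.val + 1) < g i.val) := by
    intro i j
    constructor
    · rintro ⟨hmem, hab⟩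
      have h1 : (j : ℕ) < g i.val := (hmemg i j).mp hmem
      have h2 : g i.val ≤ (j : ℕ) + 1 := by
        by_cases hjb : (j : ℕ) + 1 < b
        · have hnot : ¬ ((j : ℕ) + 1 < g i.val) := fun hcon =>
            hab (i, (⟨j.val + 1, hjb⟩ : Fin b))
              (by rw [Prod.mk_lt_mk]; right; exact ⟨le_refl _, by rw [Fin.lt_def]; simp⟩)
              ((hmemg _ _).mpr hcon)
          omega
        · have := hgb i.val
          have := j.isLt
          omega
      have h3 : g (i.val + 1) < g i.val := by
        by_cases hia : i.val + 1 < a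
        · have hnot : ¬ ((j : ℕ) < g (i.val + 1)) := fun hcon =>
            hab ((⟨i.val + 1, hia⟩ : Fin a), j)
              (by rw [Prod.mk_lt_mk]; left; exact ⟨by rw [Fin.lt_def]; simp, le_refl _⟩)
              ((hmemg (⟨i.val + 1, hia⟩ : Fin a) j).mpr hcon)
          omega
        · rw [hg0 (i.val + 1) (by omega)]
          omega
      exact ⟨by omega, h3⟩
    · rintro ⟨hj, hlt⟩
      constructor
      · exact (hmemg i j).mpr (by omega)
      · rintro ⟨x, y⟩ hq hmem
        rw [Prod.mk_lt_mk] at hq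
        have hym := (hmemg x y).mp hmem
        rcases hq with ⟨hx, hy⟩ | ⟨hx, hy⟩
        · have hge : g x.val ≤ g (i.val + 1) := hanti (by have := (Fin.lt_def).mp hx; omega)
          have hyge : (j : ℕ) ≤ (y : ℕ) := (Fin.le_def).mp hy
          omega
        · have hge : g x.val ≤ g i.val := hanti ((Fin.le_def).mp hx)
          have hygt : (j : ℕ) < (y : ℕ) := (Fin.lt_def).mp hy
          omega
  have hcard : (I.card : ℝ) = ∑ n ∈ range a, (g n : ℝ) := by
    have h1 : (I.card : ℝ) = ∑ p : Fin a × Fin b, if p ∈ I then (1 : ℝ) else 0 := by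
      rw [Finset.sum_boole]
      congr 1
      congr 1
      ext p
      simp
    rw [h1, Fintype.sum_prod_type, ← Fin.sum_univ_eq_sum_range (fun n => (g n : ℝ)) a]
    refine Finset.sum_congr rfl fun i _ => ?_
    calc ∑ j : Fin b, (if (i, j) ∈ I then (1:ℝ) else 0)
        = ∑ j : Fin b, (if (j : ℕ) < g i.val then (1:ℝ) else 0) := by
          refine Finset.sum_congr rfl fun j _ => ?_
          exact if_congr (hmemg i j) rfl rfl
      _ = ∑ x ∈ range b, (if x < g i.val then (1:ℝ) else 0) :=
          Fin.sum_univ_eq_sum_range (fun x => if x < g i.val then (1:ℝ) else 0) b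
      _ = (g i.val : ℝ) := by
          rw [Finset.sum_boole]
          have : (range b).filter (fun x => x < g i.val) = range (g i.val) := by
            ext x
            simp only [mem_filter, mem_range]
            have := hgb i.val
            omega
          rw [this, card_range]
  have hTin : ∀ (i : Fin a) (j : Fin b),
      Tin (i, j) I = if ((j : ℕ) = g i.val ∧ g i.val < u i.val) then (1:ℝ) else 0 := by
    intro i j
    unfold Tin
    exact if_congr (hctin i j) rfl rfl
  have hTout : ∀ (i : Fin a) (j : Fin b),
      Tout (i, j) I = if ((j : ℕ) + 1 = g i.val ∧ g (i.val + 1) < g i.val)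
        then (1:ℝ) else 0 := by
    intro i j
    unfold Tout
    exact if_congr (hctout i j) rfl rfl
  have hinnerTin : ∀ i : Fin a,
      ∑ j : Fin b, gamR a b ((i.val : ℝ) - (j.val : ℝ)) * Tin (i, j) I
        = if g i.val < u i.val then gamR a b ((i.val : ℝ) - (g i.val : ℝ)) else 0 := by
    intro i
    calc ∑ j : Fin b, gamR a b ((i.val : ℝ) - (j.val : ℝ)) * Tin (i, j) I
        = ∑ x ∈ range b, (if (x = g i.val ∧ g i.val < u i.val)
            then gamR a b ((i.val : ℝ) - (x : ℝ)) else 0) := by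
          rw [← Fin.sum_univ_eq_sum_range
            (fun x => if (x = g i.val ∧ g i.val < u i.val)
              then gamR a b ((i.val : ℝ) - (x : ℝ)) else 0) b]
          refine Finset.sum_congr rfl fun j _ => ?_
          rw [hTin, mul_ite, mul_one, mul_zero]
      _ = _ := by
          by_cases hC : g i.val < u i.val
          · have hmem : g i.val ∈ range b := mem_range.mpr (lt_of_lt_of_le hC (hub _))
            simp only [hC, and_true, if_pos hC]
            rw [Finset.sum_ite_eq' (range b) (g i.val)
              (fun x => gamR a b ((i.val : ℝ) - (x : ℝ))), if_pos hmem]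
            simp
          · simp [hC]
  have hinnerTout : ∀ i : Fin a,
      ∑ j : Fin b, gamR a b ((i.val : ℝ) - (j.val : ℝ)) * Tout (i, j) I
        = if g (i.val + 1) < g i.val
            then gamR a b ((i.val : ℝ) - (g i.val : ℝ) + 1) else 0 := by
    intro i
    calc ∑ j : Fin b, gamR a b ((i.val : ℝ) - (j.val : ℝ)) * Tout (i, j) I
        = ∑ x ∈ range b, (if (x + 1 = g i.val ∧ g (i.val + 1) < g i.val)
            then gamR a b ((i.val : ℝ) - (x : ℝ)) else 0) := by
          rw [← Fin.sum_univ_eq_sum_range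
            (fun x => if (x + 1 = g i.val ∧ g (i.val + 1) < g i.val)
              then gamR a b ((i.val : ℝ) - (x : ℝ)) else 0) b]
          refine Finset.sum_congr rfl fun j _ => ?_
          rw [hTout, mul_ite, mul_one, mul_zero]
      _ = _ := by
          by_cases hC : g (i.val + 1) < g i.val
          · have h1 : 1 ≤ g i.val := by omega
            have hmem : g i.val - 1 ∈ range b := mem_range.mpr (by have := hgb i.val; omega)
            rw [if_pos hC]
            calc ∑ x ∈ range b, (if (x + 1 = g i.val ∧ g (i.val + 1) < g i.val)
                  then gamR a b ((i.val : ℝ) - (x : ℝ)) else 0)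
                = ∑ x ∈ range b, (if x = g i.val - 1
                  then gamR a b ((i.val : ℝ) - (x : ℝ)) else 0) := by
                  refine Finset.sum_congr rfl fun x _ => ?_
                  refine if_congr ?_ rfl rfl
                  constructor
                  · rintro ⟨h, -⟩; omega
                  · intro h; exact ⟨by omega, hC⟩
              _ = gamR a b ((i.val : ℝ) - ((g i.val - 1 : ℕ) : ℝ)) := by
                  rw [Finset.sum_ite_eq' (range b) (g i.val - 1)
                    (fun x => gamR a b ((i.val : ℝ) - (x : ℝ))), if_pos hmem]
              _ = gamR a b ((i.val : ℝ) - (g i.val : ℝ) + 1) := by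
                  congr 1
                  push_cast [h1]
                  ring
          · simp [hC]
  set A : ℕ → ℝ := fun n => if g n < u n then gamR a b ((n : ℝ) - (g n : ℝ)) else 0 with hA
  set B : ℕ → ℝ := fun n =>
    if g (n + 1) < g n then gamR a b ((n : ℝ) - (g n : ℝ) + 1) else 0 with hB
  have hS : ∑ p : Fin a × Fin b, gamR a b ((p.1.val : ℝ) - (p.2.val : ℝ)) * Tsgn p I
      = ∑ n ∈ range a, (A n - B n) := by
    rw [Fintype.sum_prod_type]
    rw [← Fin.sum_univ_eq_sum_range (fun n => A n - B n) a]
    refine Finset.sum_congr rfl fun i _ => ?_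
    show ∑ j : Fin b, gamR a b ((i.val : ℝ) - (j.val : ℝ)) * Tsgn (i, j) I
      = (if g i.val < u i.val then gamR a b ((i.val : ℝ) - (g i.val : ℝ)) else 0) -
        (if g (i.val + 1) < g i.val
          then gamR a b ((i.val : ℝ) - (g i.val : ℝ) + 1) else 0)
    rw [← hinnerTin i, ← hinnerTout i, ← Finset.sum_sub_distrib]
    refine Finset.sum_congr rfl fun j _ => ?_
    simp only [Tsgn]; ring
  have htelescope : ∑ n ∈ range a, (A n - B n)
      = (∑ n ∈ range a, (g n : ℝ)) - (a : ℝ) * (a - 1) / 2 - (a : ℝ) * (1 + b - a) / 2 := by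
    set Bp : ℕ → ℝ := fun n => if g n < u n then gamR a b ((n : ℝ) - (u n : ℝ)) else 0 with hBp
    have hgam_zero_a : gamR a b ((a : ℝ) - (0 : ℕ)) = 0 := by
      simp only [gamR, Nat.cast_zero]
      ring_nf
    have hgam_zero_b : gamR a b ((0 : ℝ) - (b : ℕ)) = 0 := by
      simp only [gamR]
      ring_nf
    have hAa : A a = 0 := by
      simp only [hA, hg0 a le_rfl]
      split
      · exact hgam_zero_a
      · rfl
    have hu0 : u 0 = b := by rw [hudef 0, if_pos rfl]
    have hBp0 : Bp 0 = 0 := by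
      simp only [hBp, hu0, Nat.cast_zero]
      split
      · simpa using hgam_zero_b
      · rfl
    have hBBp : ∀ n, B n = Bp (n + 1) := by
      intro n
      simp only [hB, hBp, hudef (n + 1), Nat.add_sub_cancel, if_neg (Nat.succ_ne_zero n)]
      refine if_congr Iff.rfl ?_ rfl
      push_cast
      ring
    have hsumA : ∑ n ∈ range a, A n = ∑ n ∈ range (a + 1), A n - A a := by
      rw [Finset.sum_range_succ]; ring
    have hsumB : ∑ n ∈ range a, B n = ∑ n ∈ range (a + 1), Bp n - Bp 0 := by
      rw [Finset.sum_range_succ']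
      simp only [hBBp]
      ring
    have hpoint : ∀ n, A n - Bp n
        = gamR a b ((n : ℝ) - (g n : ℝ)) - gamR a b ((n : ℝ) - (u n : ℝ)) := by
      intro n
      by_cases h : g n < u n
      · simp only [hA, hBp, if_pos h]
      · have heq : g n = u n := le_antisymm (hgu n) (not_lt.mp h)
        simp only [hA, hBp, if_neg h, heq]
        ring
    have gam_step : ∀ x : ℝ, gamR a b (x + 1) = gamR a b x + x + (1 + b - a) / 2 := by
      intro x
      simp only [gamR]
      ring
    have hGauss : ∑ n ∈ range a, (n : ℝ) = (a : ℝ) * (a - 1) / 2 := by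
      have h2 := Finset.sum_range_id_mul_two a
      have h3 : ((∑ i ∈ range a, i : ℕ) : ℝ) * 2 = (a : ℝ) * ((a : ℝ) - 1) := by
        rw [← Nat.cast_ofNat, ← Nat.cast_mul, h2]
        push_cast [Nat.cast_sub ha]
        ring
      rw [Nat.cast_sum] at h3
      linarith
    calc ∑ n ∈ range a, (A n - B n)
        = ∑ n ∈ range a, A n - ∑ n ∈ range a, B n := Finset.sum_sub_distrib _ _
      _ = ∑ n ∈ range (a + 1), (A n - Bp n) := by
          rw [hsumA, hsumB, hAa, hBp0, Finset.sum_sub_distrib]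
          ring
      _ = ∑ n ∈ range (a + 1),
            (gamR a b ((n : ℝ) - (g n : ℝ)) - gamR a b ((n : ℝ) - (u n : ℝ))) := by
          exact Finset.sum_congr rfl fun n _ => hpoint n
      _ = (∑ n ∈ range (a + 1), gamR a b ((n : ℝ) - (g n : ℝ)))
            - ∑ n ∈ range (a + 1), gamR a b ((n : ℝ) - (u n : ℝ)) := Finset.sum_sub_distrib _ _
      _ = (∑ n ∈ range a, gamR a b ((n : ℝ) - (g n : ℝ)))
            - ∑ n ∈ range a, gamR a b (((n + 1 : ℕ) : ℝ) - (g n : ℝ)) := by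
          rw [Finset.sum_range_succ (fun n => gamR a b ((n : ℝ) - (g n : ℝ))) a]
          rw [Finset.sum_range_succ' (fun n => gamR a b ((n : ℝ) - (u n : ℝ))) a]
          have e1 : gamR a b ((a : ℝ) - (g a : ℝ)) = 0 := by
            rw [hg0 a le_rfl]; exact hgam_zero_a
          have e2 : gamR a b (((0 : ℕ) : ℝ) - (u 0 : ℝ)) = 0 := by
            rw [hu0]; simpa using hgam_zero_b
          have e3 : ∀ n, u (n + 1) = g n := fun n => by
            rw [hudef (n + 1), if_neg (Nat.succ_ne_zero n), Nat.add_sub_cancel]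
          simp only [e3]
          rw [e1, e2]
          ring
      _ = (∑ n ∈ range a, (g n : ℝ)) - (a : ℝ) * (a - 1) / 2 - (a : ℝ) * (1 + b - a) / 2 := by
          have hstep : ∀ n, gamR a b (((n + 1 : ℕ) : ℝ) - (g n : ℝ))
              = gamR a b ((n : ℝ) - (g n : ℝ)) + ((n : ℝ) - (g n : ℝ)) + (1 + b - a) / 2 := by
            intro n
            rw [show (((n + 1 : ℕ) : ℝ) - (g n : ℝ))
              = ((n : ℝ) - (g n : ℝ)) + 1 by push_cast; ring]
            exact gam_step _
          simp only [hstep]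
          rw [Finset.sum_add_distrib, Finset.sum_add_distrib, Finset.sum_sub_distrib,
            Finset.sum_const, hGauss]
          simp only [card_range, nsmul_eq_mul]
          ring
  rw [hcard, hS, htelescope]
  ring

/-- On the rectangle `[a]×[b]`, the order ideal cardinality statistic `I ↦ #I` is
`ab/2` plus a linear combination of signed toggleability statistics; hence its
average along every rowmotion orbit is `ab/2`. -/
theorem rect_ideal_card_homomesy (a b : ℕ) (ha : 0 < a) (hb : 0 < b) :
    ∃ c : Fin a × Fin b → ℝ,
      (∀ I : Finset (Fin a × Fin b), IsIdeal I →
        (I.card : ℝ) = (a : ℝ) * b / 2 + ∑ p : Fin a × Fin b, c p * Tsgn p I) ∧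
      (∀ I : Finset (Fin a × Fin b), IsIdeal I → ∀ N : ℕ, 0 < N → rowmotion^[N] I = I →
        ∑ k ∈ Finset.range N, (((rowmotion^[k] I).card : ℝ))
          = N * ((a : ℝ) * b / 2)) := by
  refine ⟨fun p => gamR a b ((p.1.val : ℝ) - (p.2.val : ℝ)), ?_, ?_⟩
  · intro I hI
    exact key_identity ha hb I hI
  · intro I hI N hNpos hfix
    have hIdeal : ∀ k, IsIdeal (rowmotion^[k] I) := by
      intro k
      induction k with
      | zero => exact hI
      | succ m ih =>
          rw [Function.iterate_succ_apply']
          exact rowmotion_isIdeal _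
    calc ∑ k ∈ Finset.range N, (((rowmotion^[k] I).card : ℝ))
        = ∑ k ∈ Finset.range N, ((a : ℝ) * b / 2 +
            ∑ p : Fin a × Fin b,
              gamR a b ((p.1.val : ℝ) - (p.2.val : ℝ)) * Tsgn p (rowmotion^[k] I)) :=
          Finset.sum_congr rfl fun k _ => key_identity ha hb _ (hIdeal k)
      _ = N * ((a : ℝ) * b / 2) + ∑ p : Fin a × Fin b,
            gamR a b ((p.1.val : ℝ) - (p.2.val : ℝ))
              * ∑ k ∈ Finset.range N, Tsgn p (rowmotion^[k] I) := by
          rw [Finset.sum_add_distrib, Finset.sum_const, card_range, nsmul_eq_mul,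
            Finset.sum_comm]
          congr 1
          refine Finset.sum_congr rfl fun p _ => ?_
          rw [Finset.mul_sum]
      _ = N * ((a : ℝ) * b / 2) := by
          have : ∀ p : Fin a × Fin b,
              ∑ k ∈ Finset.range N, Tsgn p (rowmotion^[k] I) = 0 :=
            fun p => tsgn_orbit I N hfix p
          simp [this]
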